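/- arXiv:1905.08087 — 2 statements merged into one kernel-verified Lean document; each statement's English description precedes it below -/
import Mathlib

section
/- Soft backup dominates every policy-evaluation backup: for every conditional policy π, every opponent model ρ, and every Q : S × A × B → ℝ, (𝒯_{π,ρ}Q)(s,a,b) ≤ (𝒯Q)(s,a,b) for all (s,a,b), where (𝒯Q)(s,a,b) = R(s,a,b) + γ·∑_{s'} p(s,a,b,s')·log(∑_{b'} P(s',b')·(∑_{a'} exp(Q(s',a',b')/α))^α) and (𝒯_{π,ρ}Q)(s,a,b) = R(s,a,b) + γ·∑_{s'} p(s,a,b,s')·( ∑_{b'} ρ(s',b')·( ∑_{a'} π(s',b',a')·(Q(s',a',b') − α·log π(s',b',a')) ) − ∑_{b'} ρ(s',b')·log(ρ(s',b')/P(s',b')) ). -/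
/-!
Both backups share the reward and the transition average, so it suffices to compare the
bracketed terms next state by next state. Each comparison is an instance of the Gibbs
variational principle `∑ w v - KL(w ‖ P) ≤ log ∑ P exp v`: with the constant reference
weight `1` on actions it bounds the entropy-regularised action value of `π(s', b', ·)` by
`α log ∑ exp (Q / α)`, and with reference `P(s', ·)` on opponent actions it bounds the
KL-regularised opponent average by the soft value.
-/

/-- The soft Bellman operator
(𝒯Q)(s,a,b) = R(s,a,b) + γ·∑_{s'} p(s,a,b,s')·log ∑_{b'} P(s',b')·(∑_{a'} exp(Q(s',a',b')/α))^α. -/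
noncomputable def softBellman {S A B : Type*} [Fintype S] [Fintype A] [Fintype B]
    (α γ : ℝ) (R : S × A × B → ℝ) (p : S → A → B → S → ℝ) (P : S → B → ℝ)
    (Q : S × A × B → ℝ) : S × A × B → ℝ :=
  fun x => R x + γ * ∑ s', p x.1 x.2.1 x.2.2 s' *
    Real.log (∑ b', P s' b' * (∑ a', Real.exp (Q (s', a', b') / α)) ^ α)

/-- The policy-evaluation operator
(𝒯_{π,ρ}Q)(s,a,b) = R(s,a,b) + γ·∑_{s'} p(s,a,b,s')·( ∑_{b'} ρ(s',b')·( ∑_{a'}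
π(s',b',a')·(Q(s',a',b') − α·log π(s',b',a')) ) − ∑_{b'} ρ(s',b')·log(ρ(s',b')/P(s',b')) ). -/
noncomputable def evalOp {S A B : Type*} [Fintype S] [Fintype A] [Fintype B]
    (α γ : ℝ) (R : S × A × B → ℝ) (p : S → A → B → S → ℝ) (P : S → B → ℝ)
    (π : S → B → A → ℝ) (ρ : S → B → ℝ)
    (Q : S × A × B → ℝ) : S × A × B → ℝ :=
  fun x => R x + γ * ∑ s', p x.1 x.2.1 x.2.2 s' *
    ((∑ b', ρ s' b' *
        (∑ a', π s' b' a' * (Q (s', a', b') - α * Real.log (π s' b' a'))))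
      - ∑ b', ρ s' b' * Real.log (ρ s' b' / P s' b'))

open Finset

lemma univ_nonempty_of_sum_eq_one {ι M : Type*} [Fintype ι] [AddCommMonoid M] [One M]
    [NeZero (1 : M)] {w : ι → M} (h : ∑ i, w i = 1) : (univ : Finset ι).Nonempty :=
  nonempty_of_sum_ne_zero (h ▸ one_ne_zero)

section Gibbs

open Real

lemma mul_log_sub_log_le_sub {w y : ℝ} (hw : 0 ≤ w) (hy : 0 < y) :
    w * (log y - log w) ≤ y - w := by
  rcases hw.eq_or_lt with rfl | hw
  · simpa using hy.le
  · have h := log_le_sub_one_of_pos (div_pos hy hw)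
    rw [log_div hy.ne' hw.ne'] at h
    calc w * (log y - log w) ≤ w * (y / w - 1) := mul_le_mul_of_nonneg_left h hw.le
      _ = y - w := by field_simp

variable {ι : Type*} [Fintype ι] {w : ι → ℝ}

theorem sum_mul_log_sub_log_le_log_sum {x : ι → ℝ} (hw : ∀ i, 0 ≤ w i) (hw1 : ∑ i, w i = 1)
    (hx : ∀ i, 0 < x i) :
    ∑ i, w i * (log (x i) - log (w i)) ≤ log (∑ i, x i) := by
  set T := ∑ i, x i
  have hT : 0 < T := sum_pos (fun i _ => hx i) (univ_nonempty_of_sum_eq_one hw1)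
  have key : ∀ i, w i * (log (x i) - log (w i)) - w i * log T ≤ x i / T - w i := fun i => by
    have h := mul_log_sub_log_le_sub (hw i) (div_pos (hx i) hT)
    rw [log_div (hx i).ne' hT.ne'] at h
    linarith
  have hsum := sum_le_sum fun i (_ : i ∈ univ) => key i
  rw [sum_sub_distrib, sum_sub_distrib, ← sum_mul, ← sum_div, hw1, div_self hT.ne'] at hsum
  linarith

theorem sum_mul_sub_sum_mul_log_div_le_log_sum_mul_exp {P : ι → ℝ} (v : ι → ℝ)
    (hw : ∀ i, 0 ≤ w i) (hw1 : ∑ i, w i = 1) (hP : ∀ i, 0 < P i) :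
    ∑ i, w i * v i - ∑ i, w i * log (w i / P i) ≤ log (∑ i, P i * exp (v i)) := by
  refine le_of_eq_of_le ?_
    (sum_mul_log_sub_log_le_log_sum hw hw1 fun i => mul_pos (hP i) (exp_pos (v i)))
  rw [← sum_sub_distrib]
  refine sum_congr rfl fun i _ => ?_
  rcases (hw i).eq_or_lt with h | h
  · simp [← h]
  · rw [log_mul (hP i).ne' (exp_pos _).ne', log_exp, log_div h.ne' (hP i).ne']
    ring

theorem sum_mul_sub_mul_log_le_log_sum_exp_div_rpow {α : ℝ} (hα : 0 < α) (q : ι → ℝ)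
    (hw : ∀ i, 0 ≤ w i) (hw1 : ∑ i, w i = 1) :
    ∑ i, w i * (q i - α * log (w i)) ≤ log ((∑ i, exp (q i / α)) ^ α) := by
  have h := sum_mul_sub_sum_mul_log_div_le_log_sum_mul_exp (fun i => q i / α) hw hw1
    fun _ => one_pos
  simp only [div_one, one_mul] at h
  rw [log_rpow (sum_pos (fun i _ => exp_pos _) (univ_nonempty_of_sum_eq_one hw1))]
  calc ∑ i, w i * (q i - α * log (w i))
      = α * (∑ i, w i * (q i / α) - ∑ i, w i * log (w i)) := by
        rw [mul_sub, mul_sum, mul_sum, ← sum_sub_distrib]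
        refine sum_congr rfl fun i _ => ?_
        field_simp
    _ ≤ α * log (∑ i, exp (q i / α)) := mul_le_mul_of_nonneg_left h hα.le

end Gibbs

theorem evalOp_le_softBellman_general
    {S A B : Type*} [Fintype S] [Fintype A] [Fintype B]
    (α γ : ℝ) (hα : 0 < α) (hγ₀ : 0 ≤ γ)
    (R : S × A × B → ℝ)
    (p : S → A → B → S → ℝ)
    (hp_nonneg : ∀ s a b s', 0 ≤ p s a b s')
    (P : S → B → ℝ) (hP_pos : ∀ s b, 0 < P s b)
    (π : S → B → A → ℝ)
    (hπ_nonneg : ∀ s b a, 0 ≤ π s b a) (hπ_sum : ∀ s b, ∑ a, π s b a = 1)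
    (ρ : S → B → ℝ)
    (hρ_nonneg : ∀ s b, 0 ≤ ρ s b) (hρ_sum : ∀ s, ∑ b, ρ s b = 1)
    (Q : S × A × B → ℝ) :
    ∀ x : S × A × B, evalOp α γ R p P π ρ Q x ≤ softBellman α γ R p P Q x := by
  intro x
  refine add_le_add_right (mul_le_mul_of_nonneg_left (sum_le_sum fun s' _ =>
    mul_le_mul_of_nonneg_left ?_ (hp_nonneg x.1 x.2.1 x.2.2 s')) hγ₀) _
  set Z : B → ℝ := fun b' => (∑ a', Real.exp (Q (s', a', b') / α)) ^ α
  have hZ : ∀ b', 0 < Z b' := fun b' => Real.rpow_pos_of_pos (sum_pos (fun _ _ => Real.exp_pos _)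
    (univ_nonempty_of_sum_eq_one (hπ_sum s' b'))) α
  calc _ ≤ ∑ b', ρ s' b' * Real.log (Z b') - ∑ b', ρ s' b' * Real.log (ρ s' b' / P s' b') := by
        gcongr with b'
        · exact hρ_nonneg s' b'
        · exact sum_mul_sub_mul_log_le_log_sum_exp_div_rpow hα _ (hπ_nonneg s' b') (hπ_sum s' b')
    _ ≤ Real.log (∑ b', P s' b' * Real.exp (Real.log (Z b'))) :=
        sum_mul_sub_sum_mul_log_div_le_log_sum_mul_exp _ (hρ_nonneg s') (hρ_sum s') (hP_pos s')
    _ = _ := by simp only [Real.exp_log (hZ _), Z]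

/-- Soft backup dominates every policy-evaluation backup: for every
conditional policy π, every opponent model ρ, and every Q,
(𝒯_{π,ρ}Q)(s,a,b) ≤ (𝒯Q)(s,a,b) for all (s,a,b). -/
theorem evalOp_le_softBellman
    {S A B : Type*} [Fintype S] [Fintype A] [Fintype B]
    [Nonempty S] [Nonempty A] [Nonempty B]
    (α γ : ℝ) (hα : 0 < α) (hγ₀ : 0 ≤ γ) (hγ₁ : γ < 1)
    (R : S × A × B → ℝ)
    (p : S → A → B → S → ℝ)
    (hp_nonneg : ∀ s a b s', 0 ≤ p s a b s') (hp_sum : ∀ s a b, ∑ s', p s a b s' = 1)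
    (P : S → B → ℝ) (hP_pos : ∀ s b, 0 < P s b) (hP_sum : ∀ s, ∑ b, P s b = 1)
    (π : S → B → A → ℝ)
    (hπ_nonneg : ∀ s b a, 0 ≤ π s b a) (hπ_sum : ∀ s b, ∑ a, π s b a = 1)
    (ρ : S → B → ℝ)
    (hρ_nonneg : ∀ s b, 0 ≤ ρ s b) (hρ_sum : ∀ s, ∑ b, ρ s b = 1)
    (Q : S × A × B → ℝ) :
    ∀ x : S × A × B, evalOp α γ R p P π ρ Q x ≤ softBellman α γ R p P Q x :=
  evalOp_le_softBellman_general α γ hα hγ₀ R p hp_nonneg P hP_pos π hπ_nonneg hπ_sum ρ hρ_nonneg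
    hρ_sum Q
end

section
/- Opponent model improvement theorem: fix a conditional policy π and an opponent model ρ, and let Q_{π,ρ} be the unique fixed point of the policy-evaluation operator 𝒯_{π,ρ}. Define the improved opponent model ρ̃(s,b) ∝ P(s,b)·exp( ∑_a π(s,b,a)·(Q_{π,ρ}(s,a,b) − α·log π(s,b,a)) ), normalized so that ∑_b ρ̃(s,b) = 1 for every s. Then the unique fixed point Q_{π,ρ̃} of 𝒯_{π,ρ̃} satisfies Q_{π,ρ̃}(s,a,b) ≥ Q_{π,ρ}(s,a,b) for all (s,a,b). -/
/-- The improved opponent model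
ρ̃(s,b) ∝ P(s,b)·exp( ∑_a π(s,b,a)·(Q(s,a,b) − α·log π(s,b,a)) ),
normalized so that ∑_b ρ̃(s,b) = 1 for every s. -/
noncomputable def improvedOpponent {S A B : Type*} [Fintype A] [Fintype B]
    (α : ℝ) (P : S → B → ℝ) (π : S → B → A → ℝ)
    (Q : S × A × B → ℝ) : S → B → ℝ :=
  fun s b =>
    P s b * Real.exp (∑ a, π s b a * (Q (s, a, b) - α * Real.log (π s b a)))
      / ∑ b', P s b' *
          Real.exp (∑ a, π s b' a * (Q (s, a, b') - α * Real.log (π s b' a)))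

open Finset

lemma sum_mul_sub_sum_mul_le {ι : Type*} [Fintype ι] {w f g : ι → ℝ} {c : ℝ}
    (hw : ∀ i, 0 ≤ w i) (hw_sum : ∑ i, w i = 1) (hfg : ∀ i, f i - g i ≤ c) :
    ∑ i, w i * f i - ∑ i, w i * g i ≤ c := calc
  ∑ i, w i * f i - ∑ i, w i * g i = ∑ i, w i * (f i - g i) := by
    simp only [mul_sub, sum_sub_distrib]
  _ ≤ ∑ i, w i * c := sum_le_sum fun i _ => mul_le_mul_of_nonneg_left (hfg i) (hw i)
  _ = c := by rw [← sum_mul, hw_sum, one_mul]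

section Gibbs

open Real

lemma mul_log_div_sub_mul_log_div_le {x y z : ℝ} (hx : 0 ≤ x) (hy : 0 < y) (hz : 0 < z) :
    x * log (y / z) - x * log (x / z) ≤ y - x := by
  rcases hx.eq_or_lt with rfl | hx
  · simpa using hy.le
  have h := log_le_sub_one_of_pos (div_pos hy hx)
  rw [log_div hy.ne' hx.ne'] at h
  rw [log_div hy.ne' hz.ne', log_div hx.ne' hz.ne']
  calc x * (log y - log z) - x * (log x - log z) = x * (log y - log x) := by ring
    _ ≤ x * (y / x - 1) := mul_le_mul_of_nonneg_left h hx.le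
    _ = y - x := by field_simp

variable {ι : Type*} [Fintype ι]

/-- `𝔼_ρ V - KL(ρ ‖ P)`. -/
noncomputable def klRegularizedValue (P V ρ : ι → ℝ) : ℝ :=
  ∑ i, ρ i * V i - ∑ i, ρ i * log (ρ i / P i)

noncomputable def gibbs (P V : ι → ℝ) (i : ι) : ℝ :=
  P i * exp (V i) / ∑ j, P j * exp (V j)

variable [Nonempty ι] {P V : ι → ℝ}

lemma sum_mul_exp_pos (hP : ∀ i, 0 < P i) : 0 < ∑ i, P i * exp (V i) :=
  sum_pos (fun i _ => mul_pos (hP i) (exp_pos _)) univ_nonempty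

lemma gibbs_pos (hP : ∀ i, 0 < P i) (i : ι) : 0 < gibbs P V i :=
  div_pos (mul_pos (hP i) (exp_pos _)) (sum_mul_exp_pos hP)

lemma sum_gibbs (hP : ∀ i, 0 < P i) : ∑ i, gibbs P V i = 1 := by
  simp only [gibbs]
  rw [← sum_div, div_self (sum_mul_exp_pos hP).ne']

lemma log_gibbs_div (hP : ∀ i, 0 < P i) (i : ι) :
    log (gibbs P V i / P i) = V i - log (∑ j, P j * exp (V j)) := by
  have : gibbs P V i / P i = exp (V i) / ∑ j, P j * exp (V j) := by
    simp only [gibbs]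
    field_simp [(hP i).ne']
  rw [this, log_div (exp_pos _).ne' (sum_mul_exp_pos hP).ne', log_exp]

lemma klRegularizedValue_le {ρ : ι → ℝ} (hP : ∀ i, 0 < P i) (hρ : ∀ i, 0 ≤ ρ i)
    (hρ_sum : ∑ i, ρ i = 1) :
    klRegularizedValue P V ρ ≤ log (∑ i, P i * exp (V i)) := by
  set Z := ∑ i, P i * exp (V i)
  calc klRegularizedValue P V ρ
      = ∑ i, (ρ i * log Z + (ρ i * log (gibbs P V i / P i) - ρ i * log (ρ i / P i))) := by
        rw [klRegularizedValue, ← sum_sub_distrib]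
        refine sum_congr rfl fun i _ => ?_
        rw [log_gibbs_div hP]
        ring
    _ ≤ ∑ i, (ρ i * log Z + (gibbs P V i - ρ i)) := by
        refine sum_le_sum fun i _ => (add_le_add_iff_left _).2 ?_
        exact mul_log_div_sub_mul_log_div_le (hρ i) (gibbs_pos hP i) (hP i)
    _ = log Z := by
        rw [sum_add_distrib, sum_sub_distrib, ← sum_mul, hρ_sum, sum_gibbs hP]
        ring

lemma klRegularizedValue_gibbs (hP : ∀ i, 0 < P i) :
    klRegularizedValue P V (gibbs P V) = log (∑ i, P i * exp (V i)) := by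
  rw [klRegularizedValue, ← sum_sub_distrib]
  calc ∑ i, (gibbs P V i * V i - gibbs P V i * log (gibbs P V i / P i))
      = ∑ i, gibbs P V i * log (∑ j, P j * exp (V j)) := by
        refine sum_congr rfl fun i _ => ?_
        rw [log_gibbs_div hP]
        ring
    _ = log (∑ j, P j * exp (V j)) := by rw [← sum_mul, sum_gibbs hP, one_mul]

lemma klRegularizedValue_le_gibbs {ρ : ι → ℝ} (hP : ∀ i, 0 < P i) (hρ : ∀ i, 0 ≤ ρ i)
    (hρ_sum : ∑ i, ρ i = 1) :
    klRegularizedValue P V ρ ≤ klRegularizedValue P V (gibbs P V) :=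
  (klRegularizedValue_le hP hρ hρ_sum).trans_eq (klRegularizedValue_gibbs hP).symm

end Gibbs

lemma klRegularizedValue_sub_le {ι : Type*} [Fintype ι] {P V₁ V₂ ρ : ι → ℝ} {c : ℝ}
    (hρ : ∀ i, 0 ≤ ρ i) (hρ_sum : ∑ i, ρ i = 1) (hV : ∀ i, V₁ i - V₂ i ≤ c) :
    klRegularizedValue P V₁ ρ - klRegularizedValue P V₂ ρ ≤ c := by
  rw [klRegularizedValue, klRegularizedValue, sub_sub_sub_cancel_right]
  exact sum_mul_sub_sum_mul_le hρ hρ_sum hV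

/-- `hT` says at once that `T` is monotone and a `γ`-contraction in the sup norm. -/
theorem le_of_le_apply_of_apply_eq {ι : Type*} [Finite ι] {γ : ℝ} (hγ : γ < 1)
    {T : (ι → ℝ) → ι → ℝ}
    (hT : ∀ Q₁ Q₂ c, (∀ y, Q₁ y - Q₂ y ≤ c) → ∀ x, T Q₁ x - T Q₂ x ≤ γ * c)
    {Q Q' : ι → ℝ} (hQ : Q ≤ T Q) (hQ' : T Q' = Q') : Q ≤ Q' := by
  intro x
  have : Nonempty ι := ⟨x⟩
  set M := ⨆ y, (Q y - Q' y)
  have hle : ∀ y, Q y - Q' y ≤ M := le_ciSup (Finite.bddAbove_range _)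
  have hM : M ≤ γ * M := ciSup_le fun y => by
    have := hT Q Q' M hle y
    rw [hQ'] at this
    linarith [hQ y]
  have : M ≤ 0 := by nlinarith
  linarith [hle x]

section PolicyEvaluation

variable {S A B : Type*}

noncomputable def softValue [Fintype A] (α : ℝ) (π : S → B → A → ℝ) (Q : S × A × B → ℝ)
    (s : S) (b : B) : ℝ :=
  ∑ a, π s b a * (Q (s, a, b) - α * Real.log (π s b a))

variable {α γ : ℝ} {R : S × A × B → ℝ} {p : S → A → B → S → ℝ} {P : S → B → ℝ}
  {π : S → B → A → ℝ} {ρ : S → B → ℝ}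

lemma evalOp_apply [Fintype S] [Fintype A] [Fintype B] (Q : S × A × B → ℝ) (x : S × A × B) :
    evalOp α γ R p P π ρ Q x = R x + γ * ∑ s', p x.1 x.2.1 x.2.2 s' *
      klRegularizedValue (P s') (softValue α π Q s') (ρ s') :=
  rfl

lemma improvedOpponent_eq_gibbs [Fintype A] [Fintype B] (Q : S × A × B → ℝ) (s : S) :
    improvedOpponent α P π Q s = gibbs (P s) (softValue α π Q s) :=
  rfl

lemma softValue_sub_le [Fintype A] (hπ : ∀ s b a, 0 ≤ π s b a) (hπ_sum : ∀ s b, ∑ a, π s b a = 1)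
    {Q₁ Q₂ : S × A × B → ℝ} {c : ℝ} (hQ : ∀ y, Q₁ y - Q₂ y ≤ c) (s : S) (b : B) :
    softValue α π Q₁ s b - softValue α π Q₂ s b ≤ c :=
  sum_mul_sub_sum_mul_le (hπ s b) (hπ_sum s b) fun a => by linarith [hQ (s, a, b)]

lemma evalOp_sub_le [Fintype S] [Fintype A] [Fintype B] (hγ : 0 ≤ γ)
    (hp : ∀ s a b s', 0 ≤ p s a b s') (hp_sum : ∀ s a b, ∑ s', p s a b s' = 1)
    (hπ : ∀ s b a, 0 ≤ π s b a) (hπ_sum : ∀ s b, ∑ a, π s b a = 1)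
    (hρ : ∀ s b, 0 ≤ ρ s b) (hρ_sum : ∀ s, ∑ b, ρ s b = 1)
    {Q₁ Q₂ : S × A × B → ℝ} {c : ℝ} (hQ : ∀ y, Q₁ y - Q₂ y ≤ c) (x : S × A × B) :
    evalOp α γ R p P π ρ Q₁ x - evalOp α γ R p P π ρ Q₂ x ≤ γ * c := by
  rw [evalOp_apply, evalOp_apply, add_sub_add_left_eq_sub, ← mul_sub]
  refine mul_le_mul_of_nonneg_left ?_ hγ
  exact sum_mul_sub_sum_mul_le (hp _ _ _) (hp_sum _ _ _) fun s' =>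
    klRegularizedValue_sub_le (hρ s') (hρ_sum s') (softValue_sub_le hπ hπ_sum hQ s')

lemma evalOp_le_evalOp_improvedOpponent [Fintype S] [Fintype A] [Fintype B] [Nonempty B]
    (hγ : 0 ≤ γ) (hp : ∀ s a b s', 0 ≤ p s a b s') (hP : ∀ s b, 0 < P s b) (hρ : ∀ s b, 0 ≤ ρ s b)
    (hρ_sum : ∀ s, ∑ b, ρ s b = 1) (Q : S × A × B → ℝ) (x : S × A × B) :
    evalOp α γ R p P π ρ Q x ≤ evalOp α γ R p P π (improvedOpponent α P π Q) Q x := by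
  rw [evalOp_apply, evalOp_apply]
  gcongr with s'
  · exact hp _ _ _ _
  · rw [improvedOpponent_eq_gibbs]
    exact klRegularizedValue_le_gibbs (hP s') (hρ s') (hρ_sum s')

end PolicyEvaluation

theorem opponent_model_improvement_general
    {S A B : Type*} [Fintype S] [Fintype A] [Fintype B]
    [Nonempty B]
    (α γ : ℝ) (hγ₀ : 0 ≤ γ) (hγ₁ : γ < 1)
    (R : S × A × B → ℝ)
    (p : S → A → B → S → ℝ)
    (hp_nonneg : ∀ s a b s', 0 ≤ p s a b s') (hp_sum : ∀ s a b, ∑ s', p s a b s' = 1)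
    (P : S → B → ℝ) (hP_pos : ∀ s b, 0 < P s b)
    (π : S → B → A → ℝ)
    (hπ_nonneg : ∀ s b a, 0 ≤ π s b a) (hπ_sum : ∀ s b, ∑ a, π s b a = 1)
    (ρ : S → B → ℝ)
    (hρ_nonneg : ∀ s b, 0 ≤ ρ s b) (hρ_sum : ∀ s, ∑ b, ρ s b = 1)
    (Qpr : S × A × B → ℝ) (hQpr : evalOp α γ R p P π ρ Qpr = Qpr)
    (Qtilde : S × A × B → ℝ)
    (hQtilde : evalOp α γ R p P π (improvedOpponent α P π Qpr) Qtilde = Qtilde) :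
    ∀ x : S × A × B, Qpr x ≤ Qtilde x := by
  have hρt : ∀ s b, 0 ≤ improvedOpponent α P π Qpr s b := fun s b => by
    rw [improvedOpponent_eq_gibbs]
    exact (gibbs_pos (hP_pos s) b).le
  have hρt_sum : ∀ s, ∑ b, improvedOpponent α P π Qpr s b = 1 := fun s => by
    rw [improvedOpponent_eq_gibbs]
    exact sum_gibbs (hP_pos s)
  refine le_of_le_apply_of_apply_eq hγ₁
    (fun _ _ _ hQ => evalOp_sub_le hγ₀ hp_nonneg hp_sum hπ_nonneg hπ_sum hρt hρt_sum hQ)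
    (fun x => ?_) hQtilde
  calc Qpr x = evalOp α γ R p P π ρ Qpr x := (congrFun hQpr x).symm
    _ ≤ _ := evalOp_le_evalOp_improvedOpponent hγ₀ hp_nonneg hP_pos hρ_nonneg hρ_sum Qpr x

/-- Opponent model improvement theorem: if Q_{π,ρ} is the fixed point
of 𝒯_{π,ρ} and ρ̃ is the improved opponent model, then the fixed point Q_{π,ρ̃} of
𝒯_{π,ρ̃} satisfies Q_{π,ρ̃} ≥ Q_{π,ρ} pointwise. -/
theorem opponent_model_improvement
    {S A B : Type*} [Fintype S] [Fintype A] [Fintype B]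
    [Nonempty S] [Nonempty A] [Nonempty B]
    (α γ : ℝ) (hα : 0 < α) (hγ₀ : 0 ≤ γ) (hγ₁ : γ < 1)
    (R : S × A × B → ℝ)
    (p : S → A → B → S → ℝ)
    (hp_nonneg : ∀ s a b s', 0 ≤ p s a b s') (hp_sum : ∀ s a b, ∑ s', p s a b s' = 1)
    (P : S → B → ℝ) (hP_pos : ∀ s b, 0 < P s b) (hP_sum : ∀ s, ∑ b, P s b = 1)
    (π : S → B → A → ℝ)
    (hπ_nonneg : ∀ s b a, 0 ≤ π s b a) (hπ_sum : ∀ s b, ∑ a, π s b a = 1)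
    (ρ : S → B → ℝ)
    (hρ_nonneg : ∀ s b, 0 ≤ ρ s b) (hρ_sum : ∀ s, ∑ b, ρ s b = 1)
    (Qpr : S × A × B → ℝ) (hQpr : evalOp α γ R p P π ρ Qpr = Qpr)
    (Qtilde : S × A × B → ℝ)
    (hQtilde : evalOp α γ R p P π (improvedOpponent α P π Qpr) Qtilde = Qtilde) :
    ∀ x : S × A × B, Qpr x ≤ Qtilde x :=
  opponent_model_improvement_general α γ hγ₀ hγ₁ R p hp_nonneg hp_sum P hP_pos π hπ_nonneg hπ_sum ρ
    hρ_nonneg hρ_sum Qpr hQpr Qtilde hQtilde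
end
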